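/- arXiv:1411.0467 — 3 statements merged into one kernel-verified Lean document; each statement's English description precedes it below -/
import Mathlib

section
/- With m and m' the moduli dimensions of the 8-tuples d = (2323, 2241, 2231, 2117, 2079, 1957, 1953, 1899) and d' = (2321, 2263, 2187, 2163, 2037, 2001, 1919, 1909) computed by the formula m(e) = 1 - 15^2 + \sum_i C(14+e_i,14) - \sum_{i,k} C(14+e_i-e_k,14) (binomials vanishing when the top argument is less than 14), one has m - m' = 1778691086255683821703959084138; in particular m ≠ m'. -/
/-- Moduli space dimension formula: binomials with top argument below N vanish,
which is automatic since \`Nat.choose a N = 0\` for \`a < N\` and natural subtraction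
truncates at 0 (where \`Nat.choose 0 N = 0\` for \`N > 0\`). -/
def moduliDim (N : ℕ) (e : List ℕ) : ℤ :=
  1 - ((N : ℤ) + 1) ^ 2
    + (e.map (fun di => ((N + di).choose N : ℤ))).sum
    - (e.map (fun di => (e.map (fun dk => ((N + di - dk).choose N : ℤ))).sum)).sum

set_option maxRecDepth 100000 in
theorem stmt_13 :
    moduliDim 14 ([2323, 2241, 2231, 2117, 2079, 1957, 1953, 1899] : List ℕ) - moduliDim 14 ([2321, 2263, 2187, 2163, 2037, 2001, 1919, 1909] : List ℕ)
      = 1778691086255683821703959084138 ∧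
    moduliDim 14 ([2323, 2241, 2231, 2117, 2079, 1957, 1953, 1899] : List ℕ) ≠ moduliDim 14 ([2321, 2263, 2187, 2163, 2037, 2001, 1919, 1909] : List ℕ) := by
  constructor
  · simp only [moduliDim, Nat.choose_eq_descFactorial_div_factorial]
    decide
  · simp only [moduliDim, Nat.choose_eq_descFactorial_div_factorial]
    decide
end

section
/- For every a ≥ 2323, the difference \sum_{d_i ∈ d} C(a + d_i, a) - \sum_{d_i ∈ d'} C(a + d_i, a) is positive, where d = (2323, 2241, 2231, 2117, 2079, 1957, 1953, 1899) and d' = (2321, 2263, 2187, 2163, 2037, 2001, 1919, 1909). -/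
lemma double_step_aux (a e : ℕ) (h : e < a) : 2 * (a + e).choose a ≤ (a + e + 1).choose a := by
  have h1 : (a + e).choose a = (a + e).choose e := by
    have := Nat.choose_symm (Nat.le_add_right a e)
    have he : a + e - a = e := by omega
    rw [he] at this
    omega
  have h2 : (a + e + 1).choose a = (a + e).choose e + (a + e).choose (e + 1) := by
    have hs := Nat.choose_symm (show a ≤ a + e + 1 by omega)
    have he : a + e + 1 - a = e + 1 := by omega
    rw [he] at hs
    rw [← hs, Nat.choose_succ_succ]
  have h3 : (a + e).choose e ≤ (a + e).choose (e + 1) := by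
    have key := Nat.choose_succ_right_eq (a + e) e
    have he : a + e - e = a := by omega
    rw [he] at key
    have hm : (a + e).choose e * (e + 1) ≤ (a + e).choose (e + 1) * (e + 1) := by
      rw [key]
      exact Nat.mul_le_mul_left _ (by omega)
    exact Nat.le_of_mul_le_mul_right hm (by omega)
  omega

theorem stmt_14 : ∀ a : ℕ, 2323 ≤ a →
    (([2321, 2263, 2187, 2163, 2037, 2001, 1919, 1909] : List ℕ).map (fun di => (a + di).choose a)).sum <
    (([2323, 2241, 2231, 2117, 2079, 1957, 1953, 1899] : List ℕ).map (fun di => (a + di).choose a)).sum := by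
  intro a ha
  simp only [List.map_cons, List.map_nil, List.sum_cons, List.sum_nil]
  have s1 : 2 * (a + 2321).choose a ≤ (a + 2322).choose a := by
    have := double_step_aux a 2321 (by omega)
    simpa [show a + 2321 + 1 = a + 2322 from by omega] using this
  have s2 : 2 * (a + 2322).choose a ≤ (a + 2323).choose a := by
    have := double_step_aux a 2322 (by omega)
    simpa [show a + 2322 + 1 = a + 2323 from by omega] using this
  have t1 : 2 * (a + 2263).choose a ≤ (a + 2264).choose a := by
    have := double_step_aux a 2263 (by omega)
    simpa [show a + 2263 + 1 = a + 2264 from by omega] using this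
  have t2 : 2 * (a + 2264).choose a ≤ (a + 2265).choose a := by
    have := double_step_aux a 2264 (by omega)
    simpa [show a + 2264 + 1 = a + 2265 from by omega] using this
  have t3 : 2 * (a + 2265).choose a ≤ (a + 2266).choose a := by
    have := double_step_aux a 2265 (by omega)
    simpa [show a + 2265 + 1 = a + 2266 from by omega] using this
  have t4 : (a + 2266).choose a ≤ (a + 2321).choose a :=
    Nat.choose_le_choose a (by omega)
  have m1 : (a + 2187).choose a ≤ (a + 2263).choose a := Nat.choose_le_choose a (by omega)
  have m2 : (a + 2163).choose a ≤ (a + 2263).choose a := Nat.choose_le_choose a (by omega)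
  have m3 : (a + 2037).choose a ≤ (a + 2263).choose a := Nat.choose_le_choose a (by omega)
  have m4 : (a + 2001).choose a ≤ (a + 2263).choose a := Nat.choose_le_choose a (by omega)
  have m5 : (a + 1919).choose a ≤ (a + 2263).choose a := Nat.choose_le_choose a (by omega)
  have m6 : (a + 1909).choose a ≤ (a + 2263).choose a := Nat.choose_le_choose a (by omega)
  have pos : 0 < (a + 2263).choose a := Nat.choose_pos (by omega)
  omega
end

section
/- Let d = (2323, 2241, 2231, 2117, 2079, 1957, 1953, 1899) and d' = (2321, 2263, 2187, 2163, 2037, 2001, 1919, 1909), and for integers s ≥ 1 and 0 ≤ λ ≤ s let d_{λ,s-λ} be the 8s-tuple consisting of λ copies of d followed by (s-λ) copies of d'. With N = 8s + 6 and m(e) = 1 - (N+1)^2 + \sum_i C(N+e_i,N) - \sum_{i,k} C(N+e_i-e_k,N) (binomials with top argument less than N being zero), the sequence λ ↦ m(d_{λ,s-λ}) is strictly increasing: m(d_{λ+1,s-λ-1}) > m(d_{λ,s-λ}) for all 0 ≤ λ < s. -/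
/-- The composed multidegree `d_{λ,μ}`: `λ` copies of `d` followed by `μ` copies of `d'`. -/
def composed (d d' : List ℕ) (lam mu : ℕ) : List ℕ :=
  (List.replicate lam d).flatten ++ (List.replicate mu d').flatten

/-!
Write `S(L) = ∑_{x ∈ L} C(N + x, N)`. Expanding the double sum in `m`, the dimension
`m(d_{λ,μ})` is a quadratic polynomial in `λ, μ` whose coefficients are `S(d)`, `S(d')` and
`S` of the lists of nonnegative differences `x - y` within and between `d` and `d'`. Moving one
block from `d'` to `d` therefore raises `m` as soon as `2s · S(D) + S(d') ≤ S(d)`, where `D`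
collects the differences within `d`, from `d` to `d'` and from `d'` to `d`.

Since `8s ≤ N`, it suffices that `N · S(D) + 4 S(d') ≤ 4 S(d)`. Vandermonde's identity
`C(N + x, N) = ∑_k C(x, k) C(N, k)` and `N C(N, k) = (k + 1) C(N, k + 1) + k C(N, k)` write the
difference of the two sides as `∑_k c_k C(N, k)` with integer coefficients `c_k` independent of
`N`. The tuples `d, d'` have equal moments `∑ C(d_i, k)` for `k ≤ 6`, so `c_k > 0` only for
`k ≤ 10`; these terms are absorbed by the very negative `c_12`, using
`C(N, k) ≤ C(12, k) C(N, 12)`.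
For `13 ≤ k < 200` the sign of `c_k` is checked by evaluation, and for `k ≥ 200` the term
`C(2323, k)` dominates all the others.
-/

open Finset

namespace ModuliDim

theorem sum_map_sum_comm {M : Type*} [AddCommMonoid M] (L : List ℕ) (s : Finset ℕ)
    (f : ℕ → ℕ → M) :
    (L.map fun x => ∑ k ∈ s, f x k).sum = ∑ k ∈ s, (L.map fun x => f x k).sum := by
  induction L with
  | nil => simp
  | cons x L ih => simp [ih, sum_add_distrib]

theorem choose_add_eq_sum (N x : ℕ) :
    (N + x).choose N = ∑ k ∈ range (N + 1), x.choose k * N.choose k := by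
  rw [add_comm, Nat.add_choose_eq, Nat.sum_antidiagonal_eq_sum_range_succ_mk]
  refine sum_congr rfl fun k hk => ?_
  rw [Nat.choose_symm (mem_range_succ_iff.mp hk)]

theorem mul_choose_eq (N k : ℕ) :
    N * N.choose k = (k + 1) * N.choose (k + 1) + k * N.choose k := by
  rcases le_or_gt k N with hk | hk
  · rw [mul_comm (k + 1), Nat.choose_succ_right_eq, mul_comm k, ← Nat.mul_add,
      Nat.sub_add_cancel hk, mul_comm]
  · simp [Nat.choose_eq_zero_of_lt hk, Nat.choose_eq_zero_of_lt (hk.trans k.lt_succ_self)]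

theorem mul_choose_add_eq_sum (N t : ℕ) :
    N * (N + t).choose N = ∑ k ∈ range (N + 1), k * (t + 1).choose k * N.choose k := by
  set g : ℕ → ℕ := fun k => k * t.choose (k - 1) * N.choose k
  have shift : ∑ k ∈ range (N + 1), t.choose k * ((k + 1) * N.choose (k + 1)) =
      ∑ k ∈ range (N + 1), g k := by
    have top := sum_range_succ g (N + 1)
    have bottom := sum_range_succ' g (N + 1)
    simp only [g, Nat.choose_succ_self, mul_zero, add_zero, zero_mul, Nat.add_sub_cancel]
      at top bottom
    rw [← top, bottom]
    exact sum_congr rfl fun k _ => by ring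
  calc N * (N + t).choose N = ∑ k ∈ range (N + 1), t.choose k * (N * N.choose k) := by
        rw [choose_add_eq_sum, mul_sum]
        exact sum_congr rfl fun k _ => by ring
    _ = ∑ k ∈ range (N + 1), t.choose k * ((k + 1) * N.choose (k + 1))
          + ∑ k ∈ range (N + 1), t.choose k * (k * N.choose k) := by
        simp only [mul_choose_eq, mul_add, sum_add_distrib]
    _ = _ := by
        rw [shift, ← sum_add_distrib]
        refine sum_congr rfl fun k _ => ?_
        cases k with
        | zero => simp [g]
        | succ j => simp only [g, Nat.choose_succ_succ' t j, Nat.add_sub_cancel]; ring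

def binomSum (N : ℕ) (L : List ℕ) : ℕ := (L.map fun x => (N + x).choose N).sum

def binomMoment (L : List ℕ) (k : ℕ) : ℕ := (L.map fun x => x.choose k).sum

theorem binomSum_eq_sum (N : ℕ) (L : List ℕ) :
    binomSum N L = ∑ k ∈ range (N + 1), binomMoment L k * N.choose k := by
  simp only [binomSum, binomMoment, choose_add_eq_sum, sum_map_sum_comm, List.sum_map_mul_right]

theorem mul_binomSum_eq_sum (N : ℕ) (L : List ℕ) :
    N * binomSum N L =
      ∑ k ∈ range (N + 1), k * binomMoment (L.map (· + 1)) k * N.choose k := by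
  rw [binomSum, ← List.sum_map_mul_left]
  simp only [mul_choose_add_eq_sum, sum_map_sum_comm, binomMoment, List.map_map,
    Function.comp_def]
  refine sum_congr rfl fun k _ => ?_
  rw [List.sum_map_mul_right, List.sum_map_mul_left]

def posDiffs (X Y : List ℕ) : List ℕ :=
  X.flatMap fun x => (Y.filter (· ≤ x)).map (x - ·)

theorem posDiffs_cons (x : ℕ) (X Y : List ℕ) :
    posDiffs (x :: X) Y = (Y.filter (· ≤ x)).map (x - ·) ++ posDiffs X Y :=
  List.flatMap_cons

theorem binomSum_append (N : ℕ) (L L' : List ℕ) :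
    binomSum N (L ++ L') = binomSum N L + binomSum N L' := by
  simp [binomSum]

theorem cast_binomSum (N : ℕ) (L : List ℕ) :
    (binomSum N L : ℤ) = (L.map fun x => ((N + x).choose N : ℤ)).sum := by
  simp [binomSum, Nat.cast_list_sum, Function.comp_def]

-- For `N > 0`, truncated subtraction makes `C(N + x - y, N)` vanish exactly when `x < y`.
theorem sum_map_choose_add_sub {N : ℕ} (hN : 0 < N) (x : ℕ) (Y : List ℕ) :
    (Y.map fun y => ((N + x - y).choose N : ℤ)).sum =
      binomSum N ((Y.filter (· ≤ x)).map (x - ·)) := by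
  induction Y with
  | nil => simp [binomSum]
  | cons y Y ih =>
    by_cases hyx : y ≤ x
    · simp [hyx, ih, binomSum, Nat.add_sub_assoc hyx]
    · simp [hyx, ih, Nat.choose_eq_zero_of_lt (show N + x - y < N by omega)]

theorem sum_map_sum_map_choose_add_sub {N : ℕ} (hN : 0 < N) (X Y : List ℕ) :
    (X.map fun x => (Y.map fun y => ((N + x - y).choose N : ℤ)).sum).sum =
      binomSum N (posDiffs X Y) := by
  induction X with
  | nil => simp [posDiffs, binomSum]
  | cons x X ih =>
    rw [List.map_cons, List.sum_cons, ih, sum_map_choose_add_sub hN, posDiffs_cons,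
      binomSum_append, Nat.cast_add]

theorem sum_map_composed (A B : List ℕ) (l m : ℕ) (f : ℕ → ℤ) :
    ((composed A B l m).map f).sum = l * (A.map f).sum + m * (B.map f).sum := by
  simp [composed, List.sum_flatten, List.map_flatten, List.map_replicate, List.sum_replicate]

theorem moduliDim_composed {N : ℕ} (hN : 0 < N) (A B : List ℕ) (l m : ℕ) :
    moduliDim N (composed A B l m) =
      1 - ((N : ℤ) + 1) ^ 2 + l * binomSum N A + m * binomSum N B
        - (l * l * binomSum N (posDiffs A A)
          + l * m * (binomSum N (posDiffs A B) + binomSum N (posDiffs B A))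
          + m * m * binomSum N (posDiffs B B)) := by
  simp only [moduliDim, sum_map_composed, List.sum_map_add, List.sum_map_mul_left]
  simp only [sum_map_sum_map_choose_add_sub hN, cast_binomSum]
  ring

theorem binomSum_posDiffs_self_pos (N : ℕ) {B : List ℕ} (hB : B ≠ []) :
    0 < binomSum N (posDiffs B B) := by
  obtain ⟨y, B, rfl⟩ := List.exists_cons_of_ne_nil hB
  simp [binomSum, posDiffs]

theorem moduliDim_composed_lt {N : ℕ} (hN : 0 < N) (A : List ℕ) {B : List ℕ} (hB : B ≠ [])
    (l b : ℕ)
    (h : 2 * (l + b + 1) * (binomSum N (posDiffs A A) + binomSum N (posDiffs A B)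
      + binomSum N (posDiffs B A)) + binomSum N B ≤ binomSum N A) :
    moduliDim N (composed A B l (b + 1)) < moduliDim N (composed A B (l + 1) b) := by
  have hBB := binomSum_posDiffs_self_pos N hB
  rw [moduliDim_composed hN, moduliDim_composed hN]
  zify at h hBB
  have hAA : (0 : ℤ) ≤ binomSum N (posDiffs A A) := by positivity
  have hcross : (0 : ℤ) ≤ binomSum N (posDiffs A B) + binomSum N (posDiffs B A) := by positivity
  push_cast
  nlinarith [mul_nonneg (Int.natCast_nonneg b) hcross, mul_nonneg (Int.natCast_nonneg l) hcross,
    mul_nonneg (Int.natCast_nonneg b) hAA, mul_nonneg (Int.natCast_nonneg b) hBB.le]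

theorem choose_le_choose_mul_choose {N m k : ℕ} (hkm : k ≤ m) (hmN : m ≤ N) :
    N.choose k ≤ m.choose k * N.choose m := by
  have h := Nat.choose_mul (n := N) hkm
  have : 0 < (N - k).choose (m - k) := Nat.choose_pos (by omega)
  nlinarith

theorem sum_mul_choose_nonpos {a : ℕ → ℤ} {m N : ℕ} (hmN : m ≤ N)
    (hhigh : ∀ k, m < k → a k ≤ 0)
    (hlow : ∑ k ∈ range m, max (a k) 0 * m.choose k + a m ≤ 0) :
    ∑ k ∈ range (N + 1), a k * N.choose k ≤ 0 := by
  rw [← sum_range_add_sum_Ico _ (by omega : m + 1 ≤ N + 1), sum_range_succ]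
  have high : ∑ k ∈ Ico (m + 1) (N + 1), a k * N.choose k ≤ 0 :=
    sum_nonpos fun k hk => mul_nonpos_of_nonpos_of_nonneg
      (hhigh k (by simp at hk; omega)) (by positivity)
  have low : ∑ k ∈ range m, a k * N.choose k ≤
      (∑ k ∈ range m, max (a k) 0 * m.choose k) * N.choose m := by
    rw [sum_mul]
    refine sum_le_sum fun k hk => ?_
    have hk : k ≤ m := (mem_range.mp hk).le
    calc a k * N.choose k ≤ max (a k) 0 * N.choose k :=
          mul_le_mul_of_nonneg_right (le_max_left _ _) (by positivity)
      _ ≤ max (a k) 0 * (m.choose k * N.choose m) :=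
          mul_le_mul_of_nonneg_left (by exact_mod_cast choose_le_choose_mul_choose hk hmN)
            (le_max_right _ _)
      _ = _ := by ring
  have : (0 : ℤ) ≤ N.choose m := by positivity
  nlinarith

theorem pow_mul_choose_le_pow_mul_choose {a b : ℕ} (hba : b ≤ a) (j : ℕ) :
    a ^ j * b.choose j ≤ b ^ j * a.choose j := by
  induction j with
  | zero => simp
  | succ j ih =>
    have cross : a * (b - j) ≤ b * (a - j) := by
      rw [Nat.mul_sub, Nat.mul_sub, mul_comm b a]
      exact Nat.sub_le_sub_left (Nat.mul_le_mul_right j hba) _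
    refine Nat.le_of_mul_le_mul_right ?_ (Nat.add_one_pos j)
    calc a ^ (j + 1) * b.choose (j + 1) * (j + 1)
        = a * (b - j) * (a ^ j * b.choose j) := by rw [mul_assoc, Nat.choose_succ_right_eq]; ring
      _ ≤ b * (a - j) * (b ^ j * a.choose j) := Nat.mul_le_mul cross ih
      _ = b ^ (j + 1) * a.choose (j + 1) * (j + 1) := by
        rw [mul_assoc _ (a.choose _), Nat.choose_succ_right_eq]; ring

theorem const_mul_choose_le_choose {a b M j₀ j : ℕ} (hb : 0 < b) (hba : b ≤ a)
    (h₀ : M * b ^ j₀ ≤ a ^ j₀) (hj : j₀ ≤ j) : M * b.choose j ≤ a.choose j := by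
  have hpow : M * b ^ j ≤ a ^ j := by
    obtain ⟨i, rfl⟩ := Nat.exists_eq_add_of_le hj
    rw [pow_add, pow_add, ← mul_assoc]
    exact Nat.mul_le_mul h₀ (Nat.pow_le_pow_left hba i)
  refine Nat.le_of_mul_le_mul_left ?_ (pow_pos hb j)
  calc b ^ j * (M * b.choose j) = M * b ^ j * b.choose j := by ring
    _ ≤ a ^ j * b.choose j := Nat.mul_le_mul_right _ hpow
    _ ≤ b ^ j * a.choose j := pow_mul_choose_le_pow_mul_choose hba j

theorem binomMoment_le_length_mul {L : List ℕ} {n : ℕ} (h : ∀ x ∈ L, x ≤ n) (k : ℕ) :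
    binomMoment L k ≤ L.length * n.choose k := by
  simpa [binomMoment] using List.sum_le_card_nsmul (L.map fun x => x.choose k) (n.choose k)
    (by simpa using fun x hx => Nat.choose_le_choose k (h x hx))

def dA : List ℕ := [2323, 2241, 2231, 2117, 2079, 1957, 1953, 1899]

def dB : List ℕ := [2321, 2263, 2187, 2163, 2037, 2001, 1919, 1909]

def crossDiffs : List ℕ := posDiffs dA dA ++ posDiffs dA dB ++ posDiffs dB dA

def gapCoeff (k : ℕ) : ℤ :=
  k * binomMoment (crossDiffs.map (· + 1)) k + 4 * binomMoment dB k - 4 * binomMoment dA k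

theorem cast_gap_eq_sum (N : ℕ) :
    ((N * binomSum N crossDiffs + 4 * binomSum N dB : ℕ) : ℤ) - (4 * binomSum N dA : ℕ) =
      ∑ k ∈ range (N + 1), gapCoeff k * N.choose k := by
  rw [mul_binomSum_eq_sum, binomSum_eq_sum N dB, binomSum_eq_sum N dA]
  simp only [gapCoeff, Nat.cast_add, Nat.cast_mul, Nat.cast_sum, Nat.cast_ofNat, mul_sum,
    ← sum_add_distrib, ← sum_sub_distrib]
  exact sum_congr rfl fun k _ => by ring

-- `Nat.choose` unfolds exponentially in the kernel; `descFactorial` and `factorial` do not.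
set_option maxRecDepth 8000 in
theorem sum_max_gapCoeff_mul_choose_add_nonpos :
    ∑ k ∈ range 12, max (gapCoeff k) 0 * (12).choose k + gapCoeff 12 ≤ 0 := by
  simp only [gapCoeff, binomMoment, Nat.choose_eq_descFactorial_div_factorial]
  decide

set_option maxRecDepth 8000 in
theorem gapCoeff_nonpos_of_lt_200 : ∀ k < 200, 13 ≤ k → gapCoeff k ≤ 0 := by
  simp only [gapCoeff, binomMoment, Nat.choose_eq_descFactorial_div_factorial]
  decide

theorem choose_2321_add_le_choose_2323 {k : ℕ} (hk : 200 ≤ k) :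
    (2321).choose k + 8 * (2263).choose k ≤ (2323).choose k := by
  obtain ⟨j, rfl⟩ : ∃ j, k = j + 1 := ⟨k - 1, by omega⟩
  have pascal : (2323).choose (j + 1) =
      (2322).choose j + (2321).choose j + (2321).choose (j + 1) := by
    rw [Nat.choose_succ_succ' 2322, Nat.choose_succ_succ' 2321, add_assoc]
  have ratio : 46 * (2263).choose j ≤ (2321).choose j :=
    const_mul_choose_le_choose (j₀ := 199) (by norm_num) (by norm_num) (by decide) (by omega)
  have step : 8 * (2263).choose (j + 1) ≤ 2 * (2321).choose j := by
    refine Nat.le_of_mul_le_mul_right (c := j + 1) ?_ (Nat.add_one_pos j)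
    have hsucc : 8 * (2263).choose (j + 1) * (j + 1) = 8 * (2263 - j) * (2263).choose j := by
      rw [mul_assoc, Nat.choose_succ_right_eq]; ring
    have := Nat.mul_le_mul (show 8 * (2263 - j) ≤ 2 * (j + 1) * 46 by omega) ratio
    linarith
  have := Nat.choose_le_choose j (show 2321 ≤ 2322 by norm_num)
  omega

theorem mul_choose_425_le_choose_2263 {k : ℕ} (hk : 200 ≤ k) :
    25 * k * (425).choose k ≤ (2263).choose k := by
  rcases le_or_gt k 425 with hk' | hk'
  · refine le_trans (Nat.mul_le_mul_right _ (show 25 * k ≤ 10625 by omega)) ?_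
    exact const_mul_choose_le_choose (j₀ := 200) (by norm_num) (by norm_num) (by decide) hk
  · simp [Nat.choose_eq_zero_of_lt hk']

theorem choose_le_binomMoment_dA (k : ℕ) : (2323).choose k ≤ binomMoment dA k := by
  simp only [binomMoment, dA, List.map_cons, List.map_nil, List.sum_cons, List.sum_nil]
  omega

theorem binomMoment_dB_le (k : ℕ) :
    binomMoment dB k ≤ (2321).choose k + 7 * (2263).choose k := by
  have h : ∀ x ∈ dB.tail, x ≤ 2263 := by decide
  have := binomMoment_le_length_mul h k
  simp only [binomMoment, dB, List.map_cons, List.sum_cons] at this ⊢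
  simpa using this

theorem binomMoment_map_succ_crossDiffs_le (k : ℕ) :
    binomMoment (crossDiffs.map (· + 1)) k ≤ 100 * (425).choose k := by
  have h : ∀ x ∈ crossDiffs.map (· + 1), x ≤ 425 := by decide
  have hlen : crossDiffs.length = 100 := by decide
  simpa [hlen] using binomMoment_le_length_mul h k

theorem gapCoeff_nonpos_of_200_le {k : ℕ} (hk : 200 ≤ k) : gapCoeff k ≤ 0 := by
  have hA := choose_le_binomMoment_dA k
  have hB := binomMoment_dB_le k
  have hD := Nat.mul_le_mul_left k (binomMoment_map_succ_crossDiffs_le k)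
  have h425 := mul_choose_425_le_choose_2263 hk
  have h2323 := choose_2321_add_le_choose_2323 hk
  have : k * binomMoment (crossDiffs.map (· + 1)) k + 4 * binomMoment dB k ≤
      4 * binomMoment dA k := by
    linarith
  rw [gapCoeff]
  omega

theorem gapCoeff_nonpos {k : ℕ} (hk : 12 < k) : gapCoeff k ≤ 0 := by
  rcases lt_or_ge k 200 with hk' | hk'
  · exact gapCoeff_nonpos_of_lt_200 k hk' hk
  · exact gapCoeff_nonpos_of_200_le hk'

theorem mul_binomSum_crossDiffs_add_le {N : ℕ} (hN : 12 ≤ N) :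
    N * binomSum N crossDiffs + 4 * binomSum N dB ≤ 4 * binomSum N dA := by
  have := sum_mul_choose_nonpos hN (fun _ => gapCoeff_nonpos)
    sum_max_gapCoeff_mul_choose_add_nonpos
  rw [← cast_gap_eq_sum] at this
  omega

end ModuliDim

open ModuliDim

theorem stmt_19 :
    let d : List ℕ := [2323, 2241, 2231, 2117, 2079, 1957, 1953, 1899]
    let d' : List ℕ := [2321, 2263, 2187, 2163, 2037, 2001, 1919, 1909]
    ∀ s lam : ℕ, 1 ≤ s → lam < s →
      moduliDim (8 * s + 6) (composed d d' lam (s - lam)) <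
      moduliDim (8 * s + 6) (composed d d' (lam + 1) (s - lam - 1)) := by
  intro d d' s lam _ hlt
  obtain ⟨b, hb⟩ : ∃ b, s - lam = b + 1 := ⟨s - lam - 1, by omega⟩
  rw [hb, Nat.add_sub_cancel]
  have hgap := mul_binomSum_crossDiffs_add_le (N := 8 * s + 6) (by omega)
  have hsum : 2 * (lam + b + 1) * binomSum (8 * s + 6) crossDiffs + binomSum (8 * s + 6) dB ≤
      binomSum (8 * s + 6) dA := by
    rw [show lam + b + 1 = s by omega]
    nlinarith [Nat.mul_le_mul_right (binomSum (8 * s + 6) crossDiffs)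
      (show 8 * s ≤ 8 * s + 6 by omega)]
  rw [crossDiffs, binomSum_append, binomSum_append] at hsum
  exact moduliDim_composed_lt (by omega) dA (by decide) lam b hsum
end
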